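/- Let $X \in \Re^{n\times m}$ have full column rank $m \le n$. Then the differential of the Moore–Penrose inverse satisfies $dX^+ = -X^+ (dX) X^+ + (X'X)^{-1} (dX)' (I_n - XX^+)$; i.e., for a differentiable curve $X(t)$ of full column rank matrices, $\frac{d}{dt} X(t)^+ = -X^+ \dot{X} X^+ + (X'X)^{-1}\dot{X}'(I_n - XX^+)$. -/

import Mathlib

/-!
With `M = XᵀX`, invertible because `rank (XᵀX) = rank X = m`, we have `X⁺ = M⁻¹Xᵀ`. The product
rule and `d(M⁻¹) = -M⁻¹ (dM) M⁻¹` give `dX⁺ = -M⁻¹ (dXᵀ X + Xᵀ dX) M⁻¹ Xᵀ + M⁻¹ dXᵀ`, and expanding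
`X⁺ = M⁻¹Xᵀ` on the right-hand side of the claim yields the same four terms.
-/

open Matrix

-- The operator norm makes square matrices a normed algebra (for the derivative of inversion);
-- its topology is the product topology, so derivatives can still be computed entrywise.
attribute [local instance] Matrix.linftyOpNormedAddCommGroup Matrix.linftyOpNormedSpace
  Matrix.linftyOpNormedRing Matrix.linftyOpNormedAlgebra

namespace Matrix

variable {m n p : Type*} [Fintype m] [Fintype n] [Fintype p]

theorem isUnit_of_rank_eq_card {K : Type*} [Field K] [DecidableEq n] {A : Matrix n n K}
    (h : A.rank = Fintype.card n) : IsUnit A := by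
  rw [← mulVec_surjective_iff_isUnit]
  refine LinearMap.range_eq_top.1
    (Submodule.eq_top_of_finrank_eq (S := LinearMap.range A.mulVecLin) ?_)
  rw [Module.finrank_fintype_fun_eq_card]
  exact h

theorem hasDerivAt_iff_forall_apply {f : ℝ → Matrix m n ℝ} {f' : Matrix m n ℝ} {t : ℝ} :
    HasDerivAt f f' t ↔ ∀ i j, HasDerivAt (fun s => f s i j) (f' i j) t := by
  refine hasDerivAt_iff_tendsto_slope.trans ?_
  simp only [hasDerivAt_iff_tendsto_slope]
  exact tendsto_pi_nhds.trans (forall_congr' fun i => tendsto_pi_nhds)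

end Matrix

section MatrixDerivatives

variable {m n p : Type*} [Fintype m] [Fintype n] [Fintype p] {t : ℝ}

theorem HasDerivAt.matrix_mul {f : ℝ → Matrix m n ℝ} {f' : Matrix m n ℝ}
    {g : ℝ → Matrix n p ℝ} {g' : Matrix n p ℝ} (hf : HasDerivAt f f' t)
    (hg : HasDerivAt g g' t) :
    HasDerivAt (fun s => f s * g s) (f' * g t + f t * g') t := by
  rw [Matrix.hasDerivAt_iff_forall_apply] at *
  intro i k
  simp only [mul_apply, Matrix.add_apply, ← Finset.sum_add_distrib]
  exact HasDerivAt.fun_sum fun j _ => (hf i j).fun_mul (hg j k)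

theorem HasDerivAt.matrix_transpose {f : ℝ → Matrix m n ℝ} {f' : Matrix m n ℝ}
    (hf : HasDerivAt f f' t) : HasDerivAt (fun s => (f s)ᵀ) f'ᵀ t :=
  Matrix.hasDerivAt_iff_forall_apply.2 fun i j => Matrix.hasDerivAt_iff_forall_apply.1 hf j i

theorem HasDerivAt.matrix_inv [DecidableEq n] {f : ℝ → Matrix n n ℝ} {f' : Matrix n n ℝ}
    (hf : HasDerivAt f f' t) (h : IsUnit (f t)) :
    HasDerivAt (fun s => (f s)⁻¹) (-((f t)⁻¹ * f' * (f t)⁻¹)) t := by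
  obtain ⟨u, hu⟩ := h
  have hinv : (↑u⁻¹ : Matrix n n ℝ) = (f t)⁻¹ := by rw [coe_units_inv, hu]
  have := (hu ▸ hasFDerivAt_ringInverse (𝕜 := ℝ) u).comp_hasDerivAt t hf
  simp only [hinv] at this
  simp only [nonsing_inv_eq_ringInverse] at this ⊢
  exact this

end MatrixDerivatives

theorem stmt14_general (n m : ℕ) (X : ℝ → Matrix (Fin n) (Fin m) ℝ)
    (hrank : ∀ s, (X s).rank = m)
    (X' : Matrix (Fin n) (Fin m) ℝ) (t : ℝ)
    (hd : ∀ i j, HasDerivAt (fun s => X s i j) (X' i j) t)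
    (P : ℝ → Matrix (Fin m) (Fin n) ℝ)
    (hP : ∀ s, P s = ((X s)ᵀ * X s)⁻¹ * (X s)ᵀ) :
    ∀ i j, HasDerivAt (fun s => P s i j)
      (((-(P t * X' * P t) + ((X t)ᵀ * X t)⁻¹ * X'ᵀ *
        ((1 : Matrix (Fin n) (Fin n) ℝ) - X t * P t) : Matrix (Fin m) (Fin n) ℝ)) i j) t := by
  obtain rfl : P = fun s => ((X s)ᵀ * X s)⁻¹ * (X s)ᵀ := funext hP
  have hX : HasDerivAt X X' t := Matrix.hasDerivAt_iff_forall_apply.2 hd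
  have hunit : IsUnit ((X t)ᵀ * X t) :=
    isUnit_of_rank_eq_card (by rw [rank_transpose_mul_self, hrank, Fintype.card_fin])
  refine Matrix.hasDerivAt_iff_forall_apply.1 ?_
  convert ((hX.matrix_transpose.matrix_mul hX).matrix_inv hunit).matrix_mul hX.matrix_transpose
    using 1
  simp only [Matrix.mul_add, Matrix.add_mul, Matrix.neg_mul, Matrix.mul_sub, Matrix.mul_one,
    Matrix.mul_assoc, neg_add_rev]
  abel

/-- Differential of the Moore–Penrose inverse of a full column rank matrix:
for a differentiable curve `X(t)` of full column rank `n × m` matrices (where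
`X⁺ = (X'X)⁻¹X'`), one has
`d/dt X(t)⁺ = -X⁺ Ẋ X⁺ + (X'X)⁻¹ Ẋ' (I_n - XX⁺)`. -/
theorem stmt14 (n m : ℕ) (hmn : m ≤ n) (X : ℝ → Matrix (Fin n) (Fin m) ℝ)
    (hrank : ∀ s, (X s).rank = m)
    (X' : Matrix (Fin n) (Fin m) ℝ) (t : ℝ)
    (hd : ∀ i j, HasDerivAt (fun s => X s i j) (X' i j) t)
    (P : ℝ → Matrix (Fin m) (Fin n) ℝ)
    (hP : ∀ s, P s = ((X s)ᵀ * X s)⁻¹ * (X s)ᵀ) :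
    ∀ i j, HasDerivAt (fun s => P s i j)
      (((-(P t * X' * P t) + ((X t)ᵀ * X t)⁻¹ * X'ᵀ *
        ((1 : Matrix (Fin n) (Fin n) ℝ) - X t * P t) : Matrix (Fin m) (Fin n) ℝ)) i j) t :=
  stmt14_general n m X hrank X' t hd P hP
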